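/- arXiv:1311.1026 — 2 statements merged into one kernel-verified Lean document; each statement's English description precedes it below -/
import Mathlib

section
/- If δ is a limit ordinal, δ < β < λ, and δ is a non-accumulation point of e_{γ_lt(β,δ)} (where γ_lt(β,δ) is the last ordinal of the walk ρ(β,δ)), then there exists α_0 < δ such that for all α ∈ [α_0, δ), the sequence ρ(β,δ)⌢⟨δ⟩ is an initial segment of ρ(β,α). -/
/-!
Every ordinal `c` visited by the walk from `β` to `δ` has `e c ∩ δ` bounded below `δ`: for the
points before the last one this is the closedness of the clubs (since `δ ∉ e c`), and for the last
one it is the hypothesis that `δ` is a non-accumulation point. Taking the largest of these finitely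
many bounds gives `α₀ < δ` such that no `e c` meets `[α₀, δ)`; for `α ∈ [α₀, δ)` the walks to `α`
and to `δ` then choose the same minima at every step, up to and including the step to `δ`.
-/

noncomputable def walkStep (e : Ordinal → Set Ordinal) (α β : Ordinal) : Ordinal :=
  sInf {γ | γ ∈ e β ∧ α ≤ γ}

noncomputable def walk (e : Ordinal → Set Ordinal) (α β : Ordinal) : ℕ → Ordinal
  | 0 => β
  | n + 1 => walkStep e α (walk e α β n)

noncomputable def kLen (e : Ordinal → Set Ordinal) (α β : Ordinal) : ℕ :=
  sInf {k : ℕ | walk e α β k = α}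

open Set Order

section Gaps

theorem exists_disjoint_Ico_of_bdd {ι : Type*} [LinearOrder ι] [SuccOrder ι] [NoMaxOrder ι]
    {S : Set ι} {δ : ι} (hδ : IsSuccLimit δ) (hS : ∃ x < δ, ∀ y ∈ S, y < δ → y ≤ x) :
    ∃ α₀ < δ, Disjoint S (Ico α₀ δ) := by
  obtain ⟨x, hxδ, hx⟩ := hS
  refine ⟨succ x, hδ.succ_lt hxδ, Set.disjoint_left.2 fun y hyS hy => ?_⟩
  exact (succ_le_iff.1 hy.1).not_ge (hx y hyS hy.2)

theorem exists_forall_disjoint_Ico {ι : Type*} [LinearOrder ι] {δ : ι} (hδ : ¬IsMin δ)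
    (S : ℕ → Set ι) (n : ℕ) (h : ∀ l < n, ∃ α₀ < δ, Disjoint (S l) (Ico α₀ δ)) :
    ∃ α₀ < δ, ∀ l < n, Disjoint (S l) (Ico α₀ δ) := by
  induction n with
  | zero =>
    obtain ⟨a, ha⟩ := not_isMin_iff.1 hδ
    exact ⟨a, ha, fun l hl => absurd hl (Nat.not_lt_zero l)⟩
  | succ n ih =>
    obtain ⟨a, haδ, ha⟩ := ih fun l hl => h l (Nat.lt_succ_of_lt hl)
    obtain ⟨b, hbδ, hb⟩ := h n (Nat.lt_succ_self n)
    refine ⟨max a b, max_lt haδ hbδ, fun l hl => ?_⟩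
    rcases Nat.lt_succ_iff_lt_or_eq.1 hl with hl | rfl
    · exact (ha l hl).mono_right (Ico_subset_Ico_left (le_max_left a b))
    · exact hb.mono_right (Ico_subset_Ico_left (le_max_right a b))

theorem Ordinal.exists_bdd_of_notMem {S : Set Ordinal} {δ : Ordinal} (hδ : δ ≠ 0) (hS : δ ∉ S)
    (hclosed : (S ∩ Iio δ).Nonempty → sSup (S ∩ Iio δ) = δ → δ ∈ S) :
    ∃ x < δ, ∀ y ∈ S, y < δ → y ≤ x := by
  have hbdd : BddAbove (S ∩ Iio δ) := ⟨δ, fun _ hy => hy.2.le⟩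
  have hne : sSup (S ∩ Iio δ) ≠ δ := by
    intro hsup
    rcases (S ∩ Iio δ).eq_empty_or_nonempty with hempty | hnonempty
    · rw [hempty, csSup_empty, Ordinal.bot_eq_zero] at hsup
      exact hδ hsup.symm
    · exact hS (hclosed hnonempty hsup)
  exact ⟨_, (csSup_le' fun _ hy => hy.2.le).lt_of_ne hne, fun y hy hyδ => le_csSup hbdd ⟨hy, hyδ⟩⟩

end Gaps

section Walks

variable {e : Ordinal → Set Ordinal} {α δ c : Ordinal}

theorem walkStep_of_mem (h : α ∈ e c) : walkStep e α c = α :=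
  le_antisymm (csInf_le' ⟨h, le_rfl⟩) (le_csInf ⟨α, h, le_rfl⟩ fun _ hγ => hγ.2)

theorem walkStep_le (h : e c ⊆ Iio c) : walkStep e α c ≤ c := by
  rcases {γ | γ ∈ e c ∧ α ≤ γ}.eq_empty_or_nonempty with hempty | hnonempty
  · rw [walkStep, hempty, Ordinal.sInf_empty]
    exact zero_le
  · exact (h (csInf_mem hnonempty).1).le

theorem walkStep_congr (hαδ : α ≤ δ) (h : Disjoint (e c) (Ico α δ)) :
    walkStep e α c = walkStep e δ c := by
  unfold walkStep
  congr 1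
  ext γ
  refine ⟨fun ⟨hγ, hαγ⟩ => ⟨hγ, not_lt.1 fun hγδ => ?_⟩, fun ⟨hγ, hδγ⟩ => ⟨hγ, hαδ.trans hδγ⟩⟩
  exact Set.disjoint_left.1 h hγ ⟨hαγ, hγδ⟩

theorem walk_le {β : Ordinal} (h : ∀ c ≤ β, e c ⊆ Iio c) (n : ℕ) : walk e α β n ≤ β := by
  induction n with
  | zero => exact le_rfl
  | succ n ih => exact (walkStep_le (h _ ih)).trans ih

theorem walk_eq_of_disjoint {β : Ordinal} {n : ℕ} (hαδ : α ≤ δ)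
    (h : ∀ l < n, Disjoint (e (walk e δ β l)) (Ico α δ)) :
    ∀ l ≤ n, walk e α β l = walk e δ β l := by
  intro l hl
  induction l with
  | zero => rfl
  | succ l ih =>
    change walkStep e α (walk e α β l) = walkStep e δ (walk e δ β l)
    rw [ih (Nat.le_of_succ_le hl)]
    exact walkStep_congr hαδ (h l hl)

theorem walk_kLen {β : Ordinal} {n : ℕ} (h : walk e δ β n = δ) : walk e δ β (kLen e δ β) = δ :=
  Nat.sInf_mem (s := {k | walk e δ β k = δ}) ⟨n, h⟩

theorem walk_ne_of_lt_kLen {β : Ordinal} {l : ℕ} (hl : l < kLen e δ β) : walk e δ β l ≠ δ :=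
  Nat.notMem_of_lt_sInf hl

theorem notMem_of_succ_lt_kLen {β : Ordinal} {l : ℕ} (hl : l + 1 < kLen e δ β) :
    δ ∉ e (walk e δ β l) :=
  fun h => walk_ne_of_lt_kLen hl (walkStep_of_mem h)

end Walks

section Ladders

variable {lam : Ordinal} {e : Ordinal → Set Ordinal}

theorem subset_Iio_of_lt (he0 : e 0 = ∅) (heS : ∀ γ, e (γ + 1) = {γ})
    (heL : ∀ β' < lam, IsSuccLimit β' → e β' ⊆ Iio β') {c : Ordinal} (hc : c < lam) :
    e c ⊆ Iio c := by
  rcases Ordinal.zero_or_succ_or_isSuccLimit c with rfl | ⟨γ, rfl⟩ | hlim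
  · simp [he0]
  · rw [succ_eq_add_one, heS, singleton_subset_iff, mem_Iio]
    exact lt_add_one γ
  · exact heL c hc hlim

theorem mem_of_sSup_inter_Iio_eq (heS : ∀ γ, e (γ + 1) = {γ})
    (heL : ∀ β' < lam, IsSuccLimit β' →
      ∀ x < β', (e β' ∩ Iio x).Nonempty → sSup (e β' ∩ Iio x) = x → x ∈ e β')
    {c δ : Ordinal} (hc : c < lam) (hsub : e c ⊆ Iio c) (hcδ : c ≠ δ)
    (hne : (e c ∩ Iio δ).Nonempty) (hsup : sSup (e c ∩ Iio δ) = δ) : δ ∈ e c := by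
  rcases Ordinal.zero_or_succ_or_isSuccLimit c with rfl | ⟨γ, rfl⟩ | hlim
  · obtain ⟨y, hy, -⟩ := hne
    exact absurd (hsub hy) (not_lt_zero (a := y))
  · rw [succ_eq_add_one, heS] at hne hsup ⊢
    rw [hne.subset_singleton_iff.1 inter_subset_left, csSup_singleton] at hsup
    exact hsup.symm
  · rcases hcδ.lt_or_gt with hlt | hgt
    · have : sSup (e c ∩ Iio δ) ≤ c := csSup_le' fun y hy => (hsub hy.1).le
      exact absurd (hsup ▸ this) hlt.not_ge
    · exact heL c hc hlim δ hgt hne hsup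

end Ladders

theorem stmt3_general (lam β δ : Ordinal) (e : Ordinal → Set Ordinal)
    (hbl : β < lam) (hδlim : Order.IsSuccLimit δ)
    (he0 : e 0 = ∅)
    (heS : ∀ γ, e (γ + 1) = {γ})
    (heL : ∀ β' < lam, Order.IsSuccLimit β' →
      e β' ⊆ Set.Iio β' ∧ (∀ x < β', ∃ y ∈ e β', x ≤ y) ∧
      ∀ x < β', (e β' ∩ Set.Iio x).Nonempty → sSup (e β' ∩ Set.Iio x) = x → x ∈ e β')
    -- `δ ∈ nacc (e (γ_lt(β,δ)))`:
    (hmem : δ ∈ e (walk e δ β (kLen e δ β - 1)))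
    (hnacc : ∃ x < δ, ∀ y ∈ e (walk e δ β (kLen e δ β - 1)), y < δ → y ≤ x) :
    ∃ α₀ < δ, ∀ α, α₀ ≤ α → α < δ →
      (∀ l, l < kLen e δ β → walk e α β l = walk e δ β l) ∧
      walk e α β (kLen e δ β) = δ := by
  have hsub : ∀ c < lam, e c ⊆ Iio c := fun c =>
    subset_Iio_of_lt he0 heS fun β' hβ' hlim => (heL β' hβ' hlim).1
  have hlam : ∀ l, walk e δ β l < lam := fun l =>
    (walk_le (fun c hc => hsub c (hc.trans_lt hbl)) l).trans_lt hbl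
  have hbdd : ∀ l < kLen e δ β, ∃ x < δ, ∀ y ∈ e (walk e δ β l), y < δ → y ≤ x := by
    intro l hl
    rcases Nat.lt_or_ge (l + 1) (kLen e δ β) with hsucc | hlast
    · exact Ordinal.exists_bdd_of_notMem hδlim.ne_bot (notMem_of_succ_lt_kLen hsucc)
        (mem_of_sSup_inter_Iio_eq heS (fun β' hβ' hlim => (heL β' hβ' hlim).2.2) (hlam l)
          (hsub _ (hlam l)) (walk_ne_of_lt_kLen hl))
    · obtain rfl : l = kLen e δ β - 1 := by omega
      exact hnacc
  obtain ⟨α₀, hα₀δ, hgap⟩ := exists_forall_disjoint_Ico hδlim.not_isMin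
    (fun l => e (walk e δ β l)) (kLen e δ β) fun l hl =>
      exists_disjoint_Ico_of_bdd hδlim (hbdd l hl)
  refine ⟨α₀, hα₀δ, fun α hα hαδ => ?_⟩
  have hagree := walk_eq_of_disjoint (β := β) hαδ.le fun l hl =>
    (hgap l hl).mono_right (Ico_subset_Ico_left hα)
  have hδ : walk e δ β (kLen e δ β) = δ := walk_kLen (n := _ + 1) (walkStep_of_mem hmem)
  exact ⟨fun l hl => hagree l hl.le, (hagree _ le_rfl).trans hδ⟩

/-- if `δ` is limit, `δ < β < λ`, and `δ` is a non-accumulation point of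
`e (γ_lt(β,δ))` (where `γ_lt(β,δ) = γ_{k(β,δ)-1}(β,δ)` is the last ordinal of the walk),
then there is `α₀ < δ` such that for every `α ∈ [α₀, δ)` the sequence `ρ(β,δ)⌢⟨δ⟩` is an
initial segment of `ρ(β,α)`: the first `k(β,δ)` steps of the two walks agree, and the
next step of the walk from `β` to `α` is exactly `δ`. -/
theorem stmt3 (lam β δ : Ordinal) (e : Ordinal → Set Ordinal)
    (hbl : β < lam) (hδβ : δ < β) (hδlim : Order.IsSuccLimit δ)
    (he0 : e 0 = ∅)
    (heS : ∀ γ, e (γ + 1) = {γ})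
    (heL : ∀ β' < lam, Order.IsSuccLimit β' →
      e β' ⊆ Set.Iio β' ∧ (∀ x < β', ∃ y ∈ e β', x ≤ y) ∧
      ∀ x < β', (e β' ∩ Set.Iio x).Nonempty → sSup (e β' ∩ Set.Iio x) = x → x ∈ e β')
    -- `δ ∈ nacc (e (γ_lt(β,δ)))`:
    (hmem : δ ∈ e (walk e δ β (kLen e δ β - 1)))
    (hnacc : ∃ x < δ, ∀ y ∈ e (walk e δ β (kLen e δ β - 1)), y < δ → y ≤ x) :
    ∃ α₀ < δ, ∀ α, α₀ ≤ α → α < δ →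
      (∀ l, l < kLen e δ β → walk e α β l = walk e δ β l) ∧
      walk e α β (kLen e δ β) = δ :=
  stmt3_general lam β δ e hbl hδlim he0 heS heL hmem hnacc
end

section
/- If δ ∈ S (a set of ordinals of cofinality ∂ below λ = ∂⁺), each e_γ for limit γ is a club of γ of order type cf(γ) disjoint from the set of ordinals of cofinality ∂, and δ < β < λ, then the last ordinal of the walk from β to δ satisfies γ_lt(β,δ) = δ + 1; i.e., the walk from β to δ always passes through δ+1. -/
/-!
Every step of the walk from `β` down to `δ` lands in `[δ, γ)`, so the walk reaches `δ`, and the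
ordinal `γ` visited just before `δ` satisfies `min (e γ \ δ) = δ`. A limit `γ` is impossible,
since then `δ ∈ e γ` although `e γ` avoids cofinality `∂`; hence `γ` is a successor `η + 1`, and
`e (η + 1) = {η}` forces `η = δ`.
-/

section Walk

variable {e : Ordinal → Set Ordinal} {α β γ : Ordinal}

lemma walkStep_add_one (heS : ∀ γ, e (γ + 1) = {γ}) (h : α ≤ γ) :
    walkStep e α (γ + 1) = γ := by
  have hset : {x | x ∈ e (γ + 1) ∧ α ≤ x} = {γ} := by
    ext x
    simp only [heS, Set.mem_ofPred_eq, Set.mem_singleton_iff, and_iff_left_iff_imp]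
    rintro rfl
    exact h
  rw [walkStep, hset, csInf_singleton]

lemma walkStep_mem_of_cofinal (hcof : ∀ x < γ, ∃ y ∈ e γ, x ≤ y) (h : α < γ) :
    walkStep e α γ ∈ e γ ∧ α ≤ walkStep e α γ :=
  csInf_mem (hcof α h)

lemma walkStep_mem_Ico (heS : ∀ γ, e (γ + 1) = {γ})
    (hlim : Order.IsSuccLimit γ → e γ ⊆ Set.Iio γ ∧ ∀ x < γ, ∃ y ∈ e γ, x ≤ y) (h : α < γ) :
    walkStep e α γ ∈ Set.Ico α γ := by
  rcases Ordinal.zero_or_succ_or_isSuccLimit γ with rfl | ⟨η, rfl⟩ | hγ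
  · exact absurd h not_lt_zero
  · rw [Order.succ_eq_add_one] at h ⊢
    have hαη : α ≤ η := Order.lt_add_one_iff.mp h
    rw [walkStep_add_one heS hαη]
    exact ⟨hαη, Order.lt_add_one_iff.mpr le_rfl⟩
  · obtain ⟨hsub, hcof⟩ := hlim hγ
    obtain ⟨hmem, hle⟩ := walkStep_mem_of_cofinal hcof h
    exact ⟨hle, hsub hmem⟩

variable (hstep : ∀ γ, α < γ → γ ≤ β → walkStep e α γ ∈ Set.Ico α γ)
include hstep

lemma exists_walk_eq (hαβ : α ≤ β) : ∃ k, walk e α β k = α := by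
  suffices H : ∀ γ, α ≤ γ → γ ≤ β → ∀ n, walk e α β n = γ → ∃ k, walk e α β k = α from
    H β hαβ le_rfl 0 rfl
  intro γ
  induction γ using WellFoundedLT.induction with
  | ind γ IH =>
    intro hαγ hγβ n hn
    rcases hαγ.eq_or_lt with rfl | hαγ
    · exact ⟨n, hn⟩
    obtain ⟨hle, hlt⟩ := hstep γ hαγ hγβ
    exact IH _ hlt hle (hlt.le.trans hγβ) (n + 1) (by rw [walk, hn])

lemma walk_kLen_s5 (hαβ : α ≤ β) : walk e α β (kLen e α β) = α :=
  Nat.sInf_mem (exists_walk_eq hstep hαβ)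

lemma walk_mem_Ioc_of_lt_kLen (hαβ : α ≤ β) {n : ℕ} (hn : n < kLen e α β) :
    walk e α β n ∈ Set.Ioc α β := by
  have hne : ∀ m < kLen e α β, walk e α β m ≠ α := fun m hm h =>
    hm.not_ge (Nat.sInf_le h)
  induction n with
  | zero => exact ⟨hαβ.lt_of_ne (hne 0 hn).symm, le_rfl⟩
  | succ n ih =>
    obtain ⟨hαw, hwβ⟩ := ih (Nat.lt_of_succ_lt hn)
    obtain ⟨hle, hlt⟩ := hstep _ hαw hwβ
    exact ⟨hle.lt_of_ne (hne _ hn).symm, hlt.le.trans hwβ⟩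

lemma walk_kLen_pred_mem_Ioc_and_walkStep_eq (hαβ : α < β) :
    walk e α β (kLen e α β - 1) ∈ Set.Ioc α β ∧
      walkStep e α (walk e α β (kLen e α β - 1)) = α := by
  have hlast := walk_kLen_s5 hstep hαβ.le
  have hpos : 0 < kLen e α β := Nat.pos_of_ne_zero fun h => by
    rw [h, walk] at hlast
    exact hαβ.ne' hlast
  refine ⟨walk_mem_Ioc_of_lt_kLen hstep hαβ.le (Nat.sub_lt hpos one_pos), ?_⟩
  rwa [← Nat.sub_add_cancel hpos, walk] at hlast

end Walk

theorem stmt5_general (par : Cardinal.{0})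
    (lam : Ordinal.{0})
    (S : Set Ordinal.{0}) (hS : ∀ δ ∈ S, δ < lam ∧ δ.cof = par)
    (e : Ordinal.{0} → Set Ordinal.{0})
    (heS : ∀ γ, e (γ + 1) = {γ})
    (heL : ∀ γ < lam, Order.IsSuccLimit γ →
      e γ ⊆ Set.Iio γ ∧ (∀ x < γ, ∃ y ∈ e γ, x ≤ y) ∧
      (∀ x < γ, (e γ ∩ Set.Iio x).Nonempty → sSup (e γ ∩ Set.Iio x) = x → x ∈ e γ) ∧
      Ordinal.type (Subrel ((· < ·) : Ordinal.{0} → Ordinal.{0} → Prop) (· ∈ e γ)) =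
        Ordinal.lift.{1,0} γ.cof.ord ∧
      ∀ x ∈ e γ, x.cof ≠ par)
    (δ β : Ordinal.{0}) (hδS : δ ∈ S) (hδβ : δ < β) (hβlam : β < lam) :
    walk e δ β (kLen e δ β - 1) = δ + 1 := by
  have hstep : ∀ γ, δ < γ → γ ≤ β → walkStep e δ γ ∈ Set.Ico δ γ := by
    intro γ hδγ hγβ
    refine walkStep_mem_Ico heS (fun hγ => ?_) hδγ
    obtain ⟨hsub, hcof, -⟩ := heL γ (hγβ.trans_lt hβlam) hγ
    exact ⟨hsub, hcof⟩
  obtain ⟨⟨hδγ, hγβ⟩, hlast⟩ := walk_kLen_pred_mem_Ioc_and_walkStep_eq hstep hδβ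
  generalize walk e δ β (kLen e δ β - 1) = γ at hδγ hγβ hlast ⊢
  rcases Ordinal.zero_or_succ_or_isSuccLimit γ with rfl | ⟨η, rfl⟩ | hγ
  · exact absurd hδγ not_lt_zero
  · rw [Order.succ_eq_add_one] at hδγ hlast ⊢
    rw [walkStep_add_one heS (Order.lt_add_one_iff.mp hδγ)] at hlast
    rw [hlast]
  · obtain ⟨-, hcof, -, -, havoid⟩ := heL γ (hγβ.trans_lt hβlam) hγ
    have hδmem := (walkStep_mem_of_cofinal hcof hδγ).1
    rw [hlast] at hδmem
    exact absurd (hS δ hδS).2 (havoid δ hδmem)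

/-- let `λ = ∂⁺` with `∂` regular, `S ⊆ {α < λ : cf α = ∂}`, and let
`⟨e_γ⟩` be a ladder system where each `e_γ`, for limit `γ < λ`, is a club of `γ` of
order type `cf γ` disjoint from the set of ordinals of cofinality `∂`.  If `δ ∈ S`
and `δ < β < λ`, then the last ordinal of the walk from `β` to `δ` is `δ + 1`:
`γ_lt(β,δ) = γ_{k(β,δ)-1}(β,δ) = δ + 1`. -/
theorem stmt5 (par : Cardinal.{0}) (hpar : par.IsRegular)
    (lam : Ordinal.{0}) (hlam : lam = (Order.succ par).ord)
    (S : Set Ordinal.{0}) (hS : ∀ δ ∈ S, δ < lam ∧ δ.cof = par)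
    (e : Ordinal.{0} → Set Ordinal.{0})
    (he0 : e 0 = ∅)
    (heS : ∀ γ, e (γ + 1) = {γ})
    (heL : ∀ γ < lam, Order.IsSuccLimit γ →
      e γ ⊆ Set.Iio γ ∧ (∀ x < γ, ∃ y ∈ e γ, x ≤ y) ∧
      (∀ x < γ, (e γ ∩ Set.Iio x).Nonempty → sSup (e γ ∩ Set.Iio x) = x → x ∈ e γ) ∧
      Ordinal.type (Subrel ((· < ·) : Ordinal.{0} → Ordinal.{0} → Prop) (· ∈ e γ)) =
        Ordinal.lift.{1,0} γ.cof.ord ∧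
      ∀ x ∈ e γ, x.cof ≠ par)
    (δ β : Ordinal.{0}) (hδS : δ ∈ S) (hδβ : δ < β) (hβlam : β < lam) :
    walk e δ β (kLen e δ β - 1) = δ + 1 :=
  stmt5_general par lam S hS e heS heL δ β hδS hδβ hβlam
end
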